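/- A harmonic function φ on a graded graph Γ, not everywhere finite, is semifinite if and only if for every vertex λ the equality φ(λ) = lim_{N→∞} Σ_{μ ≥ λ, |μ|=N, 0<φ(μ)<+∞} dim(λ,μ)φ(μ) holds. -/

import Mathlib

open Filter Topology ENNReal
open scoped Classical

noncomputable section

structure GradedGraph where
  V : Type
  lvl : V → ℕ
  levelFinite : ∀ n : ℕ, {v : V | lvl v = n}.Finite
  k : V → V → ℝ
  k_nonneg : ∀ a b, 0 ≤ k a b
  k_grade : ∀ a b, k a b ≠ 0 → lvl b = lvl a + 1
  exists_up : ∀ a, ∃ b, 0 < k a b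

namespace GradedGraph

variable (G : GradedGraph)

/-- The edge relation `λ ↗ μ`. -/
def Adj (a b : G.V) : Prop := 0 < G.k a b

/-- The path order: `a ≤ b` iff there is a (possibly empty) path from `a` to `b`. -/
def Le : G.V → G.V → Prop := Relation.ReflTransGen G.Adj

/-- `dimAux n a b` : weighted number of paths of length `n` from `a` to `b`. -/
def dimAux : ℕ → G.V → G.V → ℝ
  | 0, a, b => if a = b then 1 else 0
  | n + 1, a, b => ∑ᶠ c, dimAux n a c * G.k c b

/-- The shifted dimension `dim(a,b)`: weighted number of paths from `a` to `b`. -/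
def dim (a b : G.V) : ℝ := G.dimAux (G.lvl b - G.lvl a) a b

def IsIdeal (I : Set G.V) : Prop := ∀ a ∈ I, ∀ b, G.Le a b → b ∈ I

def IsCoideal (J : Set G.V) : Prop := ∀ a ∈ J, ∀ b, G.Le b a → b ∈ J

def IsSaturatedIdeal (I : Set G.V) : Prop :=
  G.IsIdeal I ∧ ∀ a, (∀ b, G.Adj a b → b ∈ I) → a ∈ I

def IsSaturatedCoideal (J : Set G.V) : Prop :=
  G.IsCoideal J ∧ ∀ a ∈ J, ∃ b ∈ J, G.Adj a b

def IsPrimitiveCoideal (J : Set G.V) : Prop :=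
  G.IsSaturatedCoideal J ∧ ∀ J1 J2 : Set G.V, G.IsSaturatedCoideal J1 →
    G.IsSaturatedCoideal J2 → J = J1 ∪ J2 → J = J1 ∨ J = J2

/-- A harmonic function `φ : Γ → ℝ≥0 ∪ {+∞}`. -/
def Harmonic (φ : G.V → ℝ≥0∞) : Prop :=
  ∀ a, φ a = ∑ᶠ b, ENNReal.ofReal (G.k a b) * φ b

/-- The submodule of relations `λ = Σ_{μ : λ↗μ} κ(λ,μ)·μ` in the free module on vertices. -/
def relSub : Submodule ℝ (G.V →₀ ℝ) :=
  Submodule.span ℝ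
    {x | ∃ a : G.V, x = Finsupp.single a 1 - ∑ᶠ b, G.k a b • Finsupp.single b (1 : ℝ)}

/-- The group `K_0(Γ)`. -/
abbrev K0 := (G.V →₀ ℝ) ⧸ G.relSub

def toK0 : (G.V →₀ ℝ) →ₗ[ℝ] G.K0 := G.relSub.mkQ

/-- The class of a vertex in `K_0(Γ)`. -/
def vtx (a : G.V) : G.K0 := G.toK0 (Finsupp.single a 1)

/-- The positive cone `K_0^+(Γ)` generated by the vertices. -/
def cone : Set G.K0 := {x | ∃ c : G.V →₀ ℝ, (∀ a, 0 ≤ c a) ∧ x = G.toK0 c}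

/-- The partial order `x ≤_K y` defined by the cone. -/
def leK (x y : G.K0) : Prop := y - x ∈ G.cone

/-- The value of (the `ℝ≥0`-linear extension of) `φ` on a nonnegative element of the
free module on vertices. -/
def evalC (φ : G.V → ℝ≥0∞) (c : G.V →₀ ℝ) : ℝ≥0∞ :=
  ∑ a ∈ c.support, ENNReal.ofReal (c a) * φ a

/-- A semifinite harmonic function: it is harmonic, not everywhere finite, and its value
on any element of the cone is the supremum of its finite values on smaller cone elements
(stated on nonnegative representatives). -/
def Semifinite (φ : G.V → ℝ≥0∞) : Prop :=
  G.Harmonic φ ∧ (∃ a, φ a = ⊤) ∧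
    ∀ c : G.V →₀ ℝ, (∀ a, 0 ≤ c a) →
      G.evalC φ c = ⨆ d : {d : G.V →₀ ℝ //
        (∀ a, 0 ≤ d a) ∧ G.leK (G.toK0 d) (G.toK0 c) ∧ G.evalC φ d ≠ ⊤},
          G.evalC φ d.1

/-- A finite or semifinite harmonic function. -/
def FinOrSemifinite (φ : G.V → ℝ≥0∞) : Prop :=
  (G.Harmonic φ ∧ ∀ a, φ a ≠ ⊤) ∨ G.Semifinite φ

/-- An indecomposable (finite or semifinite, not identically zero) harmonic function:
any finite or semifinite harmonic `ψ ≤ φ` not vanishing identically on the finiteness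
ideal of `φ` is proportional to `φ` on the finiteness ideal of `φ`. -/
def Indecomposable (φ : G.V → ℝ≥0∞) : Prop :=
  G.FinOrSemifinite φ ∧ (∃ a, φ a ≠ 0) ∧
    ∀ ψ : G.V → ℝ≥0∞, G.FinOrSemifinite ψ → (∀ a, ψ a ≤ φ a) →
      (∃ a, φ a ≠ ⊤ ∧ ψ a ≠ 0) →
        ∃ C : ℝ≥0∞, ∀ a, φ a ≠ ⊤ → ψ a = C * φ a

end GradedGraph

structure BranchingGraph extends GradedGraph where
  root : V
  root_lvl : lvl root = 0
  root_unique : ∀ v, lvl v = 0 → v = root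
  exists_down : ∀ v, lvl v ≠ 0 → ∃ u, 0 < k u v

end

/-!
Expanding a combination `c` of vertices along all paths up to a level `N` above its support
gives `c = Σ_{|μ| = N} push(c)_μ · μ` in `K_0(Γ)` and `φ(c) = Σ_{|μ| = N} push(c)_μ φ(μ)`, where
`push(c)_μ = Σ_a c_a dim(a, μ)`. Keeping only the `μ` with `φ(μ) < ∞` gives an element below `c`
whose value `S_N(c)` (`finiteLevelSum`) is finite, and `S_N(c)` increases with `N` because a
vertex of finite value only sees vertices of finite value above it. Conversely, if `d ≤_K c`,
say `c = d + e` in `K_0(Γ)` with `e ≥ 0`, then `push` annihilates `c - d - e` at all high enough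
levels, so the expansion of `d` is eventually dominated by that of `c`, and a finite `φ(d)` is at
most `S_N(c)` for large `N`. Hence the supremum in the definition of semifiniteness is
`sup_N S_N(c)`; as `S_N` is additive in `c`, it suffices to take `c = λ`, and `S_N(λ)` is the sum
in the statement.
-/

open scoped NNReal

noncomputable section

lemma Finsupp.sum_single_apply_nonneg {α : Type*} {s : Finset α} {f : α → ℝ}
    (hf : ∀ a, 0 ≤ f a) (x : α) : 0 ≤ (∑ a ∈ s, Finsupp.single a (f a)) x :=
  Finset.sum_nonneg (fun a _ => Finsupp.single_nonneg.2 (hf a)) x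

namespace GradedGraph

variable (G : GradedGraph)

def level (n : ℕ) : Finset G.V := (G.levelFinite n).toFinset

variable {G}

@[simp]
lemma mem_level {n : ℕ} {v : G.V} : v ∈ G.level n ↔ G.lvl v = n := Set.Finite.mem_toFinset _

lemma finsum_eq_sum_level {M : Type*} [AddCommMonoid M] (a : G.V) {f : G.V → M}
    (hf : ∀ b, G.k a b = 0 → f b = 0) : ∑ᶠ b, f b = ∑ b ∈ G.level (G.lvl a + 1), f b :=
  finsum_eq_finsetSum_of_support_subset _ fun b hb =>
    mem_level.2 (G.k_grade a b fun hk => hb (hf b hk))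

lemma dimAux_nonneg : ∀ (n : ℕ) (a b : G.V), 0 ≤ G.dimAux n a b
  | 0, a, b => by rw [dimAux]; split <;> norm_num
  | n + 1, a, b => by
    rw [dimAux]
    exact finsum_nonneg fun c => mul_nonneg (dimAux_nonneg n a c) (G.k_nonneg c b)

lemma dimAux_ne_zero : ∀ {n : ℕ} {a b : G.V},
    G.dimAux n a b ≠ 0 → G.Le a b ∧ G.lvl b = G.lvl a + n
  | 0, a, b, h => by
    rw [dimAux] at h
    split_ifs at h with hab
    · exact ⟨hab ▸ .refl, by rw [hab, add_zero]⟩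
    · exact absurd rfl h
  | n + 1, a, b, h => by
    rw [dimAux] at h
    obtain ⟨c, hc⟩ : ∃ c, G.dimAux n a c * G.k c b ≠ 0 := by
      by_contra! hzero
      exact h (finsum_eq_zero_of_forall_eq_zero hzero)
    obtain ⟨hac, hlvl⟩ := dimAux_ne_zero (left_ne_zero_of_mul hc)
    have hk := right_ne_zero_of_mul hc
    exact ⟨hac.tail ((G.k_nonneg c b).lt_of_ne' hk), by rw [G.k_grade c b hk, hlvl, add_assoc]⟩

lemma dimAux_succ (n : ℕ) (a b : G.V) :
    G.dimAux (n + 1) a b = ∑ c ∈ G.level (G.lvl a + n), G.dimAux n a c * G.k c b := by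
  rw [dimAux]
  exact finsum_eq_finsetSum_of_support_subset _ fun c hc =>
    mem_level.2 (dimAux_ne_zero (left_ne_zero_of_mul hc)).2

lemma dimAux_succ' : ∀ (n : ℕ) (a b : G.V),
    G.dimAux (n + 1) a b = ∑ c ∈ G.level (G.lvl a + 1), G.k a c * G.dimAux n c b
  | 0, a, b => by
    rw [dimAux_succ, add_zero]
    simp only [dimAux, mul_ite, ite_mul, one_mul, mul_one, mul_zero, zero_mul,
      Finset.sum_ite_eq, Finset.sum_ite_eq', mem_level, if_true]
    split_ifs with hb
    · rfl
    · exact by_contra fun hk => hb (G.k_grade a b hk)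
  | n + 1, a, b => by
    rw [dimAux_succ]
    simp_rw [dimAux_succ' n a, Finset.sum_mul, mul_assoc]
    rw [Finset.sum_comm]
    refine Finset.sum_congr rfl fun c hc => ?_
    rw [← Finset.mul_sum, dimAux_succ, mem_level.1 hc, add_right_comm, add_assoc]

lemma dim_of_lvl_le {a b : G.V} (h : G.lvl b ≤ G.lvl a) :
    G.dim a b = if a = b then 1 else 0 := by
  rw [dim, Nat.sub_eq_zero_of_le h, dimAux]

lemma dim_nonneg (a b : G.V) : 0 ≤ G.dim a b := dimAux_nonneg _ a b

lemma dim_eq_sum_dim_mul_k {a ν : G.V} {N : ℕ} (ha : G.lvl a ≤ N) (hν : G.lvl ν = N + 1) :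
    G.dim a ν = ∑ μ ∈ G.level N, G.dim a μ * G.k μ ν := by
  rw [dim, hν, Nat.sub_add_comm ha, dimAux_succ, Nat.add_sub_cancel' ha]
  refine Finset.sum_congr rfl fun μ hμ => ?_
  rw [dim, mem_level.1 hμ]

lemma dim_eq_sum_k_mul {a μ : G.V} (h : G.lvl a < G.lvl μ) :
    G.dim a μ = ∑ b ∈ G.level (G.lvl a + 1), G.k a b * G.dim b μ := by
  obtain ⟨n, hn⟩ := Nat.exists_eq_add_of_lt h
  rw [dim, hn, show G.lvl a + n + 1 - G.lvl a = n + 1 by omega, dimAux_succ']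
  refine Finset.sum_congr rfl fun b hb => ?_
  rw [dim, hn, mem_level.1 hb, show G.lvl a + n + 1 - (G.lvl a + 1) = n by omega]

lemma sum_level_dim_smul {M : Type*} [AddCommMonoid M] [Module ℝ≥0 M] {f : G.V → M}
    (hf : ∀ a, f a = ∑ b ∈ G.level (G.lvl a + 1), (G.k a b).toNNReal • f b)
    {a : G.V} {N : ℕ} (hN : G.lvl a ≤ N) :
    ∑ μ ∈ G.level N, (G.dim a μ).toNNReal • f μ = f a := by
  induction N, hN using Nat.le_induction with
  | base =>
    rw [Finset.sum_eq_single_of_mem a (mem_level.2 rfl)]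
    · rw [dim_of_lvl_le le_rfl, if_pos rfl, Real.toNNReal_one, one_smul]
    · intro μ hμ hne
      rw [dim_of_lvl_le (mem_level.1 hμ).le, if_neg hne.symm, Real.toNNReal_zero, zero_smul]
  | succ N hN ih =>
    calc ∑ ν ∈ G.level (N + 1), (G.dim a ν).toNNReal • f ν
        = ∑ ν ∈ G.level (N + 1), ∑ μ ∈ G.level N,
            (G.dim a μ).toNNReal • (G.k μ ν).toNNReal • f ν := by
          refine Finset.sum_congr rfl fun ν hν => ?_
          rw [dim_eq_sum_dim_mul_k hN (mem_level.1 hν), Real.toNNReal_sum_of_nonneg fun μ _ =>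
            mul_nonneg (dim_nonneg a μ) (G.k_nonneg μ ν), Finset.sum_smul]
          simp_rw [Real.toNNReal_mul (dim_nonneg a _), mul_smul]
      _ = ∑ μ ∈ G.level N, (G.dim a μ).toNNReal • f μ := by
          rw [Finset.sum_comm]
          refine Finset.sum_congr rfl fun μ hμ => ?_
          rw [← Finset.smul_sum, hf μ, mem_level.1 hμ]
      _ = f a := ih

variable {φ : G.V → ℝ≥0∞}

lemma Harmonic.eq_sum_level (hφ : G.Harmonic φ) (a : G.V) :
    φ a = ∑ b ∈ G.level (G.lvl a + 1), ENNReal.ofReal (G.k a b) * φ b := by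
  rw [hφ a, finsum_eq_sum_level a fun b hk => by rw [hk, ENNReal.ofReal_zero, zero_mul]]

lemma Harmonic.eq_sum_dim (hφ : G.Harmonic φ) {a : G.V} {N : ℕ} (hN : G.lvl a ≤ N) :
    φ a = ∑ μ ∈ G.level N, ENNReal.ofReal (G.dim a μ) * φ μ :=
  (sum_level_dim_smul (f := φ) (fun a => hφ.eq_sum_level a) hN).symm

lemma Harmonic.eq_sum_level_finite (hφ : G.Harmonic φ) {a : G.V} (ha : φ a ≠ ⊤) :
    φ a = ∑ b ∈ G.level (G.lvl a + 1) with φ b ≠ ⊤, ENNReal.ofReal (G.k a b) * φ b := by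
  refine (hφ.eq_sum_level a).trans
    (Finset.sum_filter_of_ne (p := (φ · ≠ ⊤)) fun b hb hne htop => ha ?_).symm
  rw [hφ.eq_sum_level, ENNReal.sum_eq_top]
  exact ⟨b, hb, by rw [htop, ENNReal.mul_top (left_ne_zero_of_mul hne)]⟩

lemma vtx_eq_sum_level (a : G.V) :
    G.vtx a = ∑ b ∈ G.level (G.lvl a + 1), G.k a b • G.vtx b := by
  have hrel : G.toK0 (Finsupp.single a 1 - ∑ᶠ b, G.k a b • Finsupp.single b (1 : ℝ)) = 0 :=
    (Submodule.Quotient.mk_eq_zero _).2 (Submodule.subset_span ⟨a, rfl⟩)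
  rw [finsum_eq_sum_level a fun b hk => by rw [hk, zero_smul], map_sub, map_sum,
    sub_eq_zero] at hrel
  simpa only [map_smul, vtx] using hrel

lemma vtx_eq_sum_dim {a : G.V} {N : ℕ} (hN : G.lvl a ≤ N) :
    G.vtx a = ∑ μ ∈ G.level N, G.dim a μ • G.vtx μ := by
  have key := sum_level_dim_smul (M := G.K0) (f := G.vtx) (fun a => by
    simp_rw [NNReal.smul_def, Real.coe_toNNReal _ (G.k_nonneg a _)]
    exact vtx_eq_sum_level a) hN
  simp_rw [NNReal.smul_def, Real.coe_toNNReal _ (dim_nonneg a _)] at key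
  exact key.symm

variable (G) in
def push : (G.V →₀ ℝ) →ₗ[ℝ] G.V → ℝ := Finsupp.linearCombination ℝ G.dim

lemma push_apply (c : G.V →₀ ℝ) (μ : G.V) :
    G.push c μ = ∑ a ∈ c.support, c a * G.dim a μ := by
  simp [push, Finsupp.linearCombination_apply, Finsupp.sum]

@[simp]
lemma push_single (a : G.V) : G.push (Finsupp.single a 1) = G.dim a := by
  simp [push]

lemma push_nonneg {c : G.V →₀ ℝ} (hc : ∀ a, 0 ≤ c a) (μ : G.V) : 0 ≤ G.push c μ := by
  rw [push_apply]
  exact Finset.sum_nonneg fun a _ => mul_nonneg (hc a) (dim_nonneg a μ)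

lemma toK0_single (a : G.V) (r : ℝ) : G.toK0 (Finsupp.single a r) = r • G.vtx a := by
  rw [← Finsupp.smul_single_one, map_smul, vtx]

lemma toK0_eq_sum_push {c : G.V →₀ ℝ} {N : ℕ} (hN : ∀ a ∈ c.support, G.lvl a ≤ N) :
    G.toK0 c = ∑ μ ∈ G.level N, G.push c μ • G.vtx μ := by
  conv_lhs => rw [← Finsupp.sum_single c]
  simp_rw [push_apply, Finset.sum_smul, mul_smul]
  rw [Finsupp.sum, map_sum, Finset.sum_comm]
  refine Finset.sum_congr rfl fun a ha => ?_
  rw [toK0_single, vtx_eq_sum_dim (hN a ha), Finset.smul_sum]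

lemma evalC_eq_sum_push (hφ : G.Harmonic φ) {c : G.V →₀ ℝ} (hc : ∀ a, 0 ≤ c a) {N : ℕ}
    (hN : ∀ a ∈ c.support, G.lvl a ≤ N) :
    G.evalC φ c = ∑ μ ∈ G.level N, ENNReal.ofReal (G.push c μ) * φ μ := by
  simp_rw [push_apply, ENNReal.ofReal_sum_of_nonneg fun a _ =>
    mul_nonneg (hc a) (dim_nonneg a _), ENNReal.ofReal_mul (hc _), Finset.sum_mul, mul_assoc]
  rw [evalC, Finset.sum_comm]
  refine Finset.sum_congr rfl fun a ha => ?_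
  rw [← Finset.mul_sum, ← hφ.eq_sum_dim (hN a ha)]

lemma push_eventually_eq_zero {r : G.V →₀ ℝ} (hr : r ∈ G.relSub) :
    ∃ M, ∀ μ, M ≤ G.lvl μ → G.push r μ = 0 := by
  induction hr using Submodule.span_induction with
  | mem x hx =>
    obtain ⟨a, rfl⟩ := hx
    refine ⟨G.lvl a + 1, fun μ hμ => ?_⟩
    rw [finsum_eq_sum_level a fun b hk => by rw [hk, zero_smul]]
    simp only [map_sub, map_sum, map_smul, push_single, Pi.sub_apply, Finset.sum_apply,
      Pi.smul_apply, smul_eq_mul]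
    rw [dim_eq_sum_k_mul hμ, sub_self]
  | zero => exact ⟨0, fun μ _ => by rw [map_zero, Pi.zero_apply]⟩
  | add x y _ _ hx hy =>
    obtain ⟨M, hM⟩ := hx
    obtain ⟨M', hM'⟩ := hy
    refine ⟨max M M', fun μ hμ => ?_⟩
    rw [map_add, Pi.add_apply, hM μ (le_of_max_le_left hμ), hM' μ (le_of_max_le_right hμ),
      add_zero]
  | smul t x _ hx =>
    obtain ⟨M, hM⟩ := hx
    exact ⟨M, fun μ hμ => by rw [map_smul, Pi.smul_apply, hM μ hμ, smul_zero]⟩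

lemma eventually_support_lvl_le (c : G.V →₀ ℝ) :
    ∀ᶠ N in atTop, ∀ a ∈ c.support, G.lvl a ≤ N :=
  (eventually_ge_atTop (c.support.sup G.lvl)).mono fun _ hN _ ha => (Finset.le_sup ha).trans hN

variable (G φ) in
def finiteLevelSum (N : ℕ) (c : G.V →₀ ℝ) : ℝ≥0∞ :=
  ∑ μ ∈ G.level N with φ μ ≠ ⊤, ENNReal.ofReal (G.push c μ) * φ μ

lemma finiteLevelSum_ne_top (N : ℕ) (c : G.V →₀ ℝ) : G.finiteLevelSum φ N c ≠ ⊤ :=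
  ENNReal.sum_ne_top.2 fun _ hμ =>
    ENNReal.mul_ne_top ENNReal.ofReal_ne_top (Finset.mem_filter.1 hμ).2

lemma evalC_eq_finiteLevelSum (hφ : G.Harmonic φ) {c : G.V →₀ ℝ} (hc : ∀ a, 0 ≤ c a) {N : ℕ}
    (hN : ∀ a ∈ c.support, G.lvl a ≤ N) (hfin : G.evalC φ c ≠ ⊤) :
    G.evalC φ c = G.finiteLevelSum φ N c := by
  rw [evalC_eq_sum_push hφ hc hN] at hfin ⊢
  refine (Finset.sum_filter_of_ne (p := (φ · ≠ ⊤)) fun μ hμ hne htop => hfin ?_).symm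
  exact ENNReal.sum_eq_top.2 ⟨μ, hμ, by rw [htop, ENNReal.mul_top (left_ne_zero_of_mul hne)]⟩

lemma finiteLevelSum_eq_sum_single {c : G.V →₀ ℝ} (hc : ∀ a, 0 ≤ c a) (N : ℕ) :
    G.finiteLevelSum φ N c =
      ∑ a ∈ c.support, ENNReal.ofReal (c a) * G.finiteLevelSum φ N (Finsupp.single a 1) := by
  simp only [finiteLevelSum, push_single, Finset.mul_sum]
  simp_rw [push_apply, ENNReal.ofReal_sum_of_nonneg fun a _ =>
    mul_nonneg (hc a) (dim_nonneg a _), ENNReal.ofReal_mul (hc _), Finset.sum_mul, mul_assoc]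
  exact Finset.sum_comm

lemma finiteLevelSum_single_monotone (hφ : G.Harmonic φ) (a : G.V) :
    Monotone fun N => G.finiteLevelSum φ N (Finsupp.single a 1) := by
  refine monotone_nat_of_le_succ fun N => ?_
  by_cases hN : G.lvl a ≤ N
  swap
  · refine le_of_eq_of_le (Finset.sum_eq_zero fun μ hμ => ?_) zero_le
    have hlvl : G.lvl μ < G.lvl a :=
      (mem_level.1 (Finset.mem_filter.1 hμ).1).trans_lt (not_le.1 hN)
    rw [push_single, dim_of_lvl_le hlvl.le, if_neg (by rintro rfl; exact lt_irrefl _ hlvl),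
      ENNReal.ofReal_zero, zero_mul]
  calc G.finiteLevelSum φ N (Finsupp.single a 1)
      = ∑ ν ∈ G.level (N + 1) with φ ν ≠ ⊤,
          (∑ μ ∈ G.level N with φ μ ≠ ⊤, ENNReal.ofReal (G.dim a μ * G.k μ ν)) * φ ν := by
        simp only [finiteLevelSum, push_single, Finset.sum_mul]
        rw [Finset.sum_comm]
        refine Finset.sum_congr rfl fun μ hμ => ?_
        rw [Finset.mem_filter, mem_level] at hμ
        rw [hφ.eq_sum_level_finite hμ.2, hμ.1, Finset.mul_sum]
        simp_rw [ENNReal.ofReal_mul (dim_nonneg a _), mul_assoc]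
    _ ≤ ∑ ν ∈ G.level (N + 1) with φ ν ≠ ⊤,
          (∑ μ ∈ G.level N, ENNReal.ofReal (G.dim a μ * G.k μ ν)) * φ ν := by
        gcongr
        exact Finset.filter_subset _ _
    _ = G.finiteLevelSum φ (N + 1) (Finsupp.single a 1) := by
        simp only [finiteLevelSum, push_single]
        refine Finset.sum_congr rfl fun ν hν => ?_
        rw [dim_eq_sum_dim_mul_k hN (mem_level.1 (Finset.mem_filter.1 hν).1),
          ENNReal.ofReal_sum_of_nonneg fun μ _ => mul_nonneg (dim_nonneg a μ) (G.k_nonneg μ ν)]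

lemma finiteLevelSum_monotone (hφ : G.Harmonic φ) {c : G.V →₀ ℝ} (hc : ∀ a, 0 ≤ c a) :
    Monotone fun N => G.finiteLevelSum φ N c := fun N M hNM => by
  simp only [finiteLevelSum_eq_sum_single hc]
  gcongr with a
  exact finiteLevelSum_single_monotone hφ a hNM

lemma finsum_eq_finiteLevelSum_single (lam : G.V) (N : ℕ) :
    ∑ᶠ μ ∈ {μ : G.V | G.Le lam μ ∧ G.lvl μ = N ∧ φ μ ≠ 0 ∧ φ μ ≠ ⊤},
        ENNReal.ofReal (G.dim lam μ) * φ μ = G.finiteLevelSum φ N (Finsupp.single lam 1) := by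
  rw [finiteLevelSum, push_single]
  refine finsum_mem_eq_sum_of_inter_support_eq _ (Set.ext fun μ => ?_)
  simp only [Set.mem_inter_iff, Set.mem_ofPred_eq, Function.mem_support, Finset.coe_filter,
    mem_level, ne_eq, mul_eq_zero, not_or, ENNReal.ofReal_eq_zero, not_le]
  have hle : 0 < G.dim lam μ → G.Le lam μ := fun h => (dimAux_ne_zero h.ne').1
  tauto

lemma eventually_evalC_le_finiteLevelSum (hφ : G.Harmonic φ) {c d : G.V →₀ ℝ}
    (hd : ∀ a, 0 ≤ d a) (hdc : G.leK (G.toK0 d) (G.toK0 c)) (hfin : G.evalC φ d ≠ ⊤) :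
    ∀ᶠ N in atTop, G.evalC φ d ≤ G.finiteLevelSum φ N c := by
  obtain ⟨e, he, hcde⟩ := hdc
  have hrel : c - d - e ∈ G.relSub := by
    refine (Submodule.Quotient.mk_eq_zero _).1 ?_
    change G.toK0 (c - d - e) = 0
    rw [map_sub, map_sub, hcde, sub_self]
  obtain ⟨M, hM⟩ := push_eventually_eq_zero hrel
  filter_upwards [eventually_ge_atTop M, eventually_support_lvl_le d] with N hMN hdN
  rw [evalC_eq_finiteLevelSum hφ hd hdN hfin]
  refine Finset.sum_le_sum fun μ hμ => mul_le_mul_left (ENNReal.ofReal_le_ofReal ?_) _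
  have hpush := hM μ (hMN.trans (mem_level.1 (Finset.mem_filter.1 hμ).1).ge)
  rw [map_sub, map_sub, Pi.sub_apply, Pi.sub_apply] at hpush
  linarith [push_nonneg he μ]

variable (G φ) in
def finitePart (N : ℕ) (c : G.V →₀ ℝ) : G.V →₀ ℝ :=
  ∑ μ ∈ G.level N with φ μ ≠ ⊤, Finsupp.single μ (G.push c μ)

lemma evalC_finitePart (N : ℕ) (c : G.V →₀ ℝ) :
    G.evalC φ (G.finitePart φ N c) = G.finiteLevelSum φ N c := by
  have happly : ∀ μ, G.finitePart φ N c μ =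
      if μ ∈ {μ ∈ G.level N | φ μ ≠ ⊤} then G.push c μ else 0 := fun μ => by
    simp [finitePart, Finset.sum_apply', Finsupp.single_apply]
  rw [evalC, finiteLevelSum]
  refine (Finset.sum_subset (fun μ hμ => ?_) fun μ _ hμ => ?_).trans
    (Finset.sum_congr rfl fun μ hμ => by rw [happly, if_pos hμ])
  · by_contra hμ'
    exact Finsupp.mem_support_iff.1 hμ (by rw [happly, if_neg hμ'])
  · rw [Finsupp.notMem_support_iff.1 hμ, ENNReal.ofReal_zero, zero_mul]

lemma finitePart_leK {c : G.V →₀ ℝ} (hc : ∀ a, 0 ≤ c a) {N : ℕ}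
    (hN : ∀ a ∈ c.support, G.lvl a ≤ N) :
    G.leK (G.toK0 (G.finitePart φ N c)) (G.toK0 c) := by
  refine ⟨∑ μ ∈ G.level N with ¬φ μ ≠ ⊤, Finsupp.single μ (G.push c μ),
    Finsupp.sum_single_apply_nonneg (push_nonneg hc), ?_⟩
  rw [toK0_eq_sum_push hN, ← Finset.sum_filter_add_sum_filter_not _ (φ · ≠ ⊤)]
  simp only [finitePart, map_sum, toK0_single, add_sub_cancel_left]

lemma iSup_evalC_leK_eq_iSup_finiteLevelSum (hφ : G.Harmonic φ) {c : G.V →₀ ℝ}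
    (hc : ∀ a, 0 ≤ c a) :
    ⨆ d : {d : G.V →₀ ℝ //
        (∀ a, 0 ≤ d a) ∧ G.leK (G.toK0 d) (G.toK0 c) ∧ G.evalC φ d ≠ ⊤}, G.evalC φ d.1
      = ⨆ N, G.finiteLevelSum φ N c := by
  apply le_antisymm
  · refine iSup_le fun ⟨d, hd, hdc, hfin⟩ => ?_
    obtain ⟨N, hN⟩ := (eventually_evalC_le_finiteLevelSum hφ hd hdc hfin).exists
    exact le_iSup_of_le N hN
  · refine iSup_le fun N => ?_
    obtain ⟨M, hNM, hM⟩ := ((eventually_ge_atTop N).and (eventually_support_lvl_le c)).exists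
    have hcand : G.evalC φ (G.finitePart φ M c) ≠ ⊤ := by
      rw [evalC_finitePart]
      exact finiteLevelSum_ne_top M c
    calc G.finiteLevelSum φ N c
        ≤ G.finiteLevelSum φ M c := finiteLevelSum_monotone hφ hc hNM
      _ = G.evalC φ (G.finitePart φ M c) := (evalC_finitePart M c).symm
      _ ≤ _ := le_iSup_of_le ⟨G.finitePart φ M c, Finsupp.sum_single_apply_nonneg (push_nonneg hc),
          finitePart_leK hc hM, hcand⟩ le_rfl

theorem semifinite_iff_forall_evalC_eq_iSup (hφ : G.Harmonic φ) (hinf : ∃ a, φ a = ⊤) :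
    G.Semifinite φ ↔
      ∀ c : G.V →₀ ℝ, (∀ a, 0 ≤ c a) → G.evalC φ c = ⨆ N, G.finiteLevelSum φ N c := by
  simp only [Semifinite, hφ, hinf, true_and]
  exact forall₂_congr fun c hc => by rw [iSup_evalC_leK_eq_iSup_finiteLevelSum hφ hc]

theorem forall_evalC_eq_iSup_iff (hφ : G.Harmonic φ) :
    (∀ c : G.V →₀ ℝ, (∀ a, 0 ≤ c a) → G.evalC φ c = ⨆ N, G.finiteLevelSum φ N c) ↔
      ∀ a, φ a = ⨆ N, G.finiteLevelSum φ N (Finsupp.single a 1) := by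
  refine ⟨fun h a => ?_, fun h c hc => ?_⟩
  · have hsingle : ∀ b, 0 ≤ Finsupp.single a (1 : ℝ) b := fun b => by
      rw [Finsupp.single_apply]; split_ifs <;> norm_num
    rw [← h _ hsingle]
    simp [evalC]
  · simp_rw [evalC, finiteLevelSum_eq_sum_single hc, h, ENNReal.mul_iSup]
    exact ENNReal.finsetSum_iSup_of_monotone fun a N M hNM =>
      mul_le_mul_right (finiteLevelSum_single_monotone hφ a hNM) _

end GradedGraph

end

/-- a not-everywhere-finite harmonic function is semifinite iff for every
vertex `λ`, `φ(λ) = lim_N Σ_{μ ≥ λ, |μ|=N, 0<φ(μ)<∞} dim(λ,μ)φ(μ)`. -/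
theorem semifinite_iff_limit (G : GradedGraph) (φ : G.V → ℝ≥0∞)
    (hφ : G.Harmonic φ) (hinf : ∃ a, φ a = ⊤) :
    G.Semifinite φ ↔ ∀ lam : G.V,
      Tendsto (fun N =>
          ∑ᶠ μ ∈ {μ : G.V | G.Le lam μ ∧ G.lvl μ = N ∧ φ μ ≠ 0 ∧ φ μ ≠ ⊤},
            ENNReal.ofReal (G.dim lam μ) * φ μ)
        atTop (𝓝 (φ lam)) := by
  rw [GradedGraph.semifinite_iff_forall_evalC_eq_iSup hφ hinf,
    GradedGraph.forall_evalC_eq_iSup_iff hφ]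
  refine forall_congr' fun lam => ?_
  simp_rw [GradedGraph.finsum_eq_finiteLevelSum_single]
  have hlim := tendsto_atTop_iSup (GradedGraph.finiteLevelSum_single_monotone hφ lam)
  exact ⟨fun h => h ▸ hlim, fun h => tendsto_nhds_unique h hlim⟩
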